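/- Let d ≥ 1, let γ > 1 be real, and let ρ : ℝ^d → ℝ be Lebesgue measurable with ρ(x) ≥ 0 for almost every x. Then there exists a constant c > 0 depending only on γ such that c·( ∫_{{x : |ρ(x)−1| ≤ 1/2}} (ρ(x) − 1)² dx + ∫_{{x : |ρ(x)−1| ≥ 1/2}} |ρ(x) − 1|^γ dx ) ≤ ∫_{ℝ^d} ( ρ(x)^γ − 1 − γ·(ρ(x) − 1) ) dx, where all integrals are with respect to Lebesgue measure and take values in [0, ∞] (the integrands are nonnegative). -/

import Mathlib

open MeasureTheory
open scoped ENNReal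

/-- Bernoulli: the entropy integrand is nonnegative. -/
lemma entropy_nonneg (γ : ℝ) (hγ : 1 < γ) {t : ℝ} (ht : 0 ≤ t) :
    0 ≤ t ^ γ - 1 - γ * (t - 1) := by
  have h := one_add_mul_self_le_rpow_one_add (s := t - 1) (by linarith) (le_of_lt hγ)
  have : (1 : ℝ) + (t - 1) = t := by ring
  rw [this] at h
  linarith

/-- Tangent line inequality for `x ↦ x^γ` from Bernoulli. -/
lemma tangent_lower (γ : ℝ) (hγ : 1 < γ) {a t : ℝ} (ha : 0 < a) (ht : 0 ≤ t) :
    γ * a ^ (γ - 1) * (t - a) ≤ t ^ γ - a ^ γ := by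
  have hs : (-1 : ℝ) ≤ t / a - 1 := by
    have : 0 ≤ t / a := div_nonneg ht ha.le
    linarith
  have h := one_add_mul_self_le_rpow_one_add hs (le_of_lt hγ)
  have h1 : (1 : ℝ) + (t / a - 1) = t / a := by ring
  rw [h1, Real.div_rpow ht ha.le] at h
  have haγ : 0 < a ^ γ := Real.rpow_pos_of_pos ha γ
  have h2 : a ^ γ * (1 + γ * (t / a - 1)) ≤ t ^ γ := by
    have h' := mul_le_mul_of_nonneg_left h haγ.le
    have e : a ^ γ * (t ^ γ / a ^ γ) = t ^ γ := by field_simp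
    rw [e] at h'
    exact h'
  have hsplit : a ^ γ = a ^ (γ - 1) * a := by
    have h := Real.rpow_add ha (γ - 1) 1
    have e : γ - 1 + 1 = γ := by ring
    rw [Real.rpow_one, e] at h
    exact h
  have heq : a ^ γ * (1 + γ * (t / a - 1)) = a ^ γ + γ * a ^ (γ - 1) * (t - a) := by
    rw [hsplit]
    field_simp
  rw [heq] at h2
  linarith

/-- Lower bound for the slope increment `(1±v)^(γ-1)` near 1. -/
lemma slope_lb (γ : ℝ) (hγ : 1 < γ) {v : ℝ} (hv0 : 0 ≤ v) (hv : v ≤ 1 / 4) :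
    4 / 5 * min (γ - 1) 1 * v ≤ (1 + v) ^ (γ - 1) - 1 ∧
      4 / 5 * min (γ - 1) 1 * v ≤ 1 - (1 - v) ^ (γ - 1) := by
  set p := γ - 1 with hp_def
  have hp : 0 < p := by simp [hp_def]; linarith
  rcases le_total p 1 with hple | hpge
  · -- 1 < γ ≤ 2
    have hmin : min p 1 = p := min_eq_left hple
    constructor
    · -- (1+v)^p - 1 ≥ (4/5) p v
      have h1v : (0:ℝ) < 1 + v := by linarith
      have hs : (-1 : ℝ) ≤ 1 / (1 + v) - 1 := by
        have : 0 ≤ 1 / (1 + v) := by positivity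
        linarith
      have h := rpow_one_add_le_one_add_mul_self hs hp.le hple
      have h1 : (1 : ℝ) + (1 / (1 + v) - 1) = 1 / (1 + v) := by ring
      rw [h1] at h
      -- h : (1/(1+v))^p ≤ 1 + p * (1/(1+v) - 1)
      have hinv : (1 / (1 + v)) ^ p = 1 / (1 + v) ^ p := by
        rw [Real.div_rpow (by norm_num) h1v.le, Real.one_rpow]
      rw [hinv] at h
      have hw1 : (1:ℝ) ≤ (1 + v) ^ p := by
        calc (1:ℝ) = 1 ^ p := (Real.one_rpow p).symm
          _ ≤ (1 + v) ^ p := Real.rpow_le_rpow (by norm_num) (by linarith) hp.le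
      have hwpos : (0:ℝ) < (1 + v) ^ p := by linarith
      -- multiply h by (1+v)^p : 1 ≤ (1+v)^p * (1 + p*(1/(1+v)-1))
      have h2 : 1 ≤ (1 + v) ^ p * (1 + p * (1 / (1 + v) - 1)) := by
        have := mul_le_mul_of_nonneg_left h hwpos.le
        rw [mul_one_div, div_self hwpos.ne'] at this
        linarith
      -- so (1+v)^p - 1 ≥ (1+v)^p * p * v/(1+v) ≥ p*v/(1+v) ≥ (4/5) p v
      have h3 : (1 + v) ^ p * (p * (v / (1 + v))) ≤ (1 + v) ^ p - 1 := by
        have e : (1 + v) ^ p * (1 + p * (1 / (1 + v) - 1))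
            = (1 + v) ^ p - (1 + v) ^ p * (p * (v / (1 + v))) := by
          field_simp
          ring
        rw [e] at h2
        linarith
      have h4 : p * (v / (1 + v)) ≤ (1 + v) ^ p * (p * (v / (1 + v))) := by
        have : 0 ≤ p * (v / (1 + v)) := by positivity
        nlinarith
      have hv5 : 4 / 5 * v ≤ v / (1 + v) := by
        rw [le_div_iff₀ h1v]
        nlinarith
      have h5 : 4 / 5 * (p * v) ≤ p * (v / (1 + v)) := by nlinarith
      rw [hmin]
      nlinarith
    · -- 1 - (1-v)^p ≥ (4/5) p v via upper Bernoulli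
      have h := rpow_one_add_le_one_add_mul_self (s := -v) (by linarith) hp.le hple
      have h1 : (1 : ℝ) + -v = 1 - v := by ring
      rw [h1] at h
      rw [hmin]
      nlinarith
  · -- γ ≥ 2
    have hmin : min p 1 = 1 := min_eq_right hpge
    rw [hmin]
    constructor
    · have h := one_add_mul_self_le_rpow_one_add (s := v) (by linarith) hpge
      nlinarith
    · have h : (1 - v) ^ p ≤ (1 - v) ^ (1:ℝ) :=
        Real.rpow_le_rpow_of_exponent_ge (by linarith) (by linarith) hpge
      rw [Real.rpow_one] at h
      nlinarith

set_option maxHeartbeats 1000000 in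
/-- The key pointwise estimate. -/
lemma pointwise_bound (γ : ℝ) (hγ : 1 < γ) :
    ∃ c0 : ℝ, 0 < c0 ∧ ∀ t : ℝ, 0 ≤ t →
      (|t - 1| ≤ 1 / 2 → c0 * (t - 1) ^ 2 ≤ t ^ γ - 1 - γ * (t - 1)) ∧
      (1 / 2 ≤ |t - 1| → c0 * |t - 1| ^ γ ≤ t ^ γ - 1 - γ * (t - 1)) := by
  set p := γ - 1 with hp_def
  have hp : 0 < p := by simp [hp_def]; linarith
  set c1 : ℝ := 4 / 5 * min p 1 with hc1_def
  have hc1 : 0 < c1 := by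
    have : 0 < min p 1 := lt_min hp one_pos
    positivity
  set cA : ℝ := γ * c1 / 4 with hcA_def
  have hcA : 0 < cA := by positivity
  -- Claim A: quadratic bound on |t-1| <= 1/2
  have claimA : ∀ t : ℝ, |t - 1| ≤ 1 / 2 → cA * (t - 1) ^ 2 ≤ t ^ γ - 1 - γ * (t - 1) := by
    intro t ht
    rw [abs_le] at ht
    obtain ⟨htl, htr⟩ := ht
    have ha : (0:ℝ) < 1 + (t - 1) / 2 := by linarith
    have htnn : (0:ℝ) ≤ t := by linarith
    have htan := tangent_lower γ hγ ha htnn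
    rw [show t - (1 + (t - 1) / 2) = (t - 1) / 2 from by ring] at htan
    have hfa := entropy_nonneg γ hγ ha.le
    rw [show (1 + (t - 1) / 2) - 1 = (t - 1) / 2 from by ring] at hfa
    set A : ℝ := (1 + (t - 1) / 2) ^ (γ - 1) with hA_def
    -- htan : γ * A * ((t-1)/2) ≤ t^γ - (1+(t-1)/2)^γ
    have key : γ * (A - 1) * ((t - 1) / 2) ≤ t ^ γ - 1 - γ * (t - 1) := by
      linarith [htan, hfa]
    have hγ0 : (0:ℝ) < γ := by linarith
    rcases le_total 1 t with hu0 | hu0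
    · -- t ≥ 1
      have hsl := (slope_lb γ hγ (v := (t - 1) / 2) (by linarith) (by linarith)).1
      rw [show (1:ℝ) + (t - 1) / 2 = 1 + (t - 1) / 2 from rfl] at hsl
      have h2 : c1 * ((t - 1) / 2) ≤ A - 1 := by
        rw [hc1_def, hA_def]
        exact hsl
      have hv : (0:ℝ) ≤ (t - 1) / 2 := by linarith
      have h3 : c1 * ((t - 1) / 2) * ((t - 1) / 2) ≤ (A - 1) * ((t - 1) / 2) :=
        mul_le_mul_of_nonneg_right h2 hv
      calc cA * (t - 1) ^ 2 = γ * (c1 * ((t - 1) / 2) * ((t - 1) / 2)) := by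
            rw [hcA_def]; ring
        _ ≤ γ * ((A - 1) * ((t - 1) / 2)) := mul_le_mul_of_nonneg_left h3 hγ0.le
        _ = γ * (A - 1) * ((t - 1) / 2) := by ring
        _ ≤ t ^ γ - 1 - γ * (t - 1) := key
    · -- t ≤ 1
      have hsl := (slope_lb γ hγ (v := (1 - t) / 2) (by linarith) (by linarith)).2
      rw [show (1:ℝ) - (1 - t) / 2 = 1 + (t - 1) / 2 from by ring] at hsl
      have h2 : c1 * ((1 - t) / 2) ≤ 1 - A := by
        rw [hc1_def, hA_def]
        exact hsl
      have hv : (0:ℝ) ≤ (1 - t) / 2 := by linarith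
      have h3 : c1 * ((1 - t) / 2) * ((1 - t) / 2) ≤ (1 - A) * ((1 - t) / 2) :=
        mul_le_mul_of_nonneg_right h2 hv
      calc cA * (t - 1) ^ 2 = γ * (c1 * ((1 - t) / 2) * ((1 - t) / 2)) := by
            rw [hcA_def]; ring
        _ ≤ γ * ((1 - A) * ((1 - t) / 2)) := mul_le_mul_of_nonneg_left h3 hγ0.le
        _ = γ * (A - 1) * ((t - 1) / 2) := by ring
        _ ≤ t ^ γ - 1 - γ * (t - 1) := key
  -- f(3/2) and f(1/2) lower bounds
  have hf32 : cA / 4 ≤ (3/2 : ℝ) ^ γ - 1 - γ * (3/2 - 1) := by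
    have := claimA (3/2) (by rw [abs_le]; constructor <;> norm_num)
    nlinarith
  have hf12 : cA / 4 ≤ (1/2 : ℝ) ^ γ - 1 - γ * (1/2 - 1) := by
    have := claimA (1/2) (by rw [abs_le]; constructor <;> norm_num)
    nlinarith
  -- the threshold M
  set M : ℝ := max (3/2) ((2 * (γ + 1)) ^ (1 / p)) with hM_def
  have hM32 : (3/2 : ℝ) ≤ M := le_max_left _ _
  have hMp : 2 * (γ + 1) ≤ M ^ p := by
    have hb : (0:ℝ) ≤ (2 * (γ + 1)) ^ (1 / p) := Real.rpow_nonneg (by linarith) _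
    calc 2 * (γ + 1) = ((2 * (γ + 1)) ^ (1 / p)) ^ p := by
          rw [← Real.rpow_mul (by linarith : (0:ℝ) ≤ 2 * (γ + 1)), one_div,
            inv_mul_cancel₀ hp.ne', Real.rpow_one]
      _ ≤ M ^ p := Real.rpow_le_rpow hb (le_max_right _ _) hp.le
  have hM1 : (0:ℝ) < M - 1 := by linarith
  have hMγpos : (0:ℝ) < (M - 1) ^ γ := Real.rpow_pos_of_pos hM1 γ
  -- final constant
  set c0 : ℝ := min cA (min (1/2) (min (cA / 4 / (M - 1) ^ γ) (cA / 4))) with hc0_def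
  have hc0 : 0 < c0 := by
    apply lt_min hcA
    apply lt_min (by norm_num)
    exact lt_min (by positivity) (by positivity)
  have hc0A : c0 ≤ cA := min_le_left _ _
  have hc0half : c0 ≤ 1/2 := le_trans (min_le_right _ _) (min_le_left _ _)
  have hc0M : c0 ≤ cA / 4 / (M - 1) ^ γ := le_trans (min_le_right _ _)
    (le_trans (min_le_right _ _) (min_le_left _ _))
  have hc0q : c0 ≤ cA / 4 := le_trans (min_le_right _ _)
    (le_trans (min_le_right _ _) (min_le_right _ _))
  clear_value p c1 cA M c0
  refine ⟨c0, hc0, fun t ht => ⟨fun hcase => ?_, fun hcase => ?_⟩⟩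
  · -- quadratic regime
    have h := claimA t hcase
    nlinarith [mul_nonneg (sub_nonneg.2 hc0A) (sq_nonneg (t - 1))]
  · -- |t-1| ≥ 1/2
    rcases le_total t 1 with htle | htge
    · -- t ≤ 1/2
      have ht12 : t ≤ 1/2 := by
        rw [abs_of_nonpos (by linarith)] at hcase
        linarith
      -- f(t) ≥ f(1/2) via tangent at 1/2
      have htan := tangent_lower γ hγ (a := 1/2) (by norm_num) ht
      have hslope : ((1:ℝ)/2) ^ (γ - 1) ≤ 1 := by
        apply Real.rpow_le_one (by norm_num) (by norm_num) (by linarith)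
      have hft : (1/2 : ℝ) ^ γ - 1 - γ * (1/2 - 1) ≤ t ^ γ - 1 - γ * (t - 1) := by
        have h1 : γ * ((1:ℝ)/2) ^ (γ - 1) * (t - 1/2) ≤ t ^ γ - (1/2) ^ γ := htan
        have hγ0 : (0:ℝ) < γ := by linarith
        have hS : 0 ≤ γ * (1 - ((1:ℝ)/2) ^ (γ - 1)) * (1/2 - t) :=
          mul_nonneg (mul_nonneg hγ0.le (by linarith)) (by linarith)
        nlinarith [h1, hS]
      -- |t-1|^γ ≤ 1
      have habs : |t - 1| = 1 - t := by rw [abs_of_nonpos (by linarith)]; ring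
      have hle1 : |t - 1| ^ γ ≤ 1 := by
        apply Real.rpow_le_one (abs_nonneg _) _ (by linarith)
        rw [habs]; linarith
      have h0 : (0:ℝ) ≤ |t - 1| ^ γ := Real.rpow_nonneg (abs_nonneg _) _
      nlinarith [mul_nonneg hc0.le (sub_nonneg.2 hle1)]
    · -- t ≥ 3/2
      have ht32 : (3/2 : ℝ) ≤ t := by
        rw [abs_of_nonneg (by linarith)] at hcase
        linarith
      have habs : |t - 1| = t - 1 := abs_of_nonneg (by linarith)
      rw [habs]
      rcases le_total t M with htM | htM
      · -- 3/2 ≤ t ≤ M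
        -- f(t) ≥ f(3/2) via tangent at 3/2 with nonneg slope
        have htan := tangent_lower γ hγ (a := 3/2) (by norm_num) ht
        have hslope : (1:ℝ) ≤ (3/2 : ℝ) ^ (γ - 1) := by
          calc (1:ℝ) = 1 ^ (γ - 1) := (Real.one_rpow _).symm
            _ ≤ (3/2 : ℝ) ^ (γ - 1) := Real.rpow_le_rpow (by norm_num) (by norm_num) (by linarith)
        have hft : (3/2 : ℝ) ^ γ - 1 - γ * (3/2 - 1) ≤ t ^ γ - 1 - γ * (t - 1) := by
          have h1 : γ * ((3:ℝ)/2) ^ (γ - 1) * (t - 3/2) ≤ t ^ γ - (3/2) ^ γ := htan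
          have hγ0 : (0:ℝ) < γ := by linarith
          have hS : 0 ≤ γ * (((3:ℝ)/2) ^ (γ - 1) - 1) * (t - 3/2) :=
            mul_nonneg (mul_nonneg hγ0.le (by linarith)) (by linarith)
          nlinarith [h1, hS]
        have hbd : (t - 1) ^ γ ≤ (M - 1) ^ γ :=
          Real.rpow_le_rpow (by linarith) (by linarith) (by linarith)
        have h0 : (0:ℝ) ≤ (t - 1) ^ γ := Real.rpow_nonneg (by linarith) _
        have key : c0 * (t - 1) ^ γ ≤ cA / 4 := by
          calc c0 * (t - 1) ^ γ ≤ (cA / 4 / (M - 1) ^ γ) * (M - 1) ^ γ := by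
                apply mul_le_mul hc0M hbd h0 (by positivity)
            _ = cA / 4 := by field_simp
        linarith
      · -- t ≥ M
        have htpos : (0:ℝ) < t := by linarith
        have htγ : t ^ γ = t * t ^ p := by
          have h := Real.rpow_add htpos 1 p
          have e : 1 + p = γ := by rw [hp_def]; ring
          rw [Real.rpow_one, e] at h
          exact h
        have htp : 2 * (γ + 1) ≤ t ^ p :=
          le_trans hMp (Real.rpow_le_rpow (by linarith) htM hp.le)
        have hhalf : 1 + γ * (t - 1) ≤ t ^ γ / 2 := by
          have h1 : t * (2 * (γ + 1)) ≤ t * t ^ p :=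
            mul_le_mul_of_nonneg_left htp htpos.le
          rw [← htγ] at h1
          nlinarith
        have hmono : (t - 1) ^ γ ≤ t ^ γ :=
          Real.rpow_le_rpow (by linarith) (by linarith) (by linarith)
        have h0 : (0:ℝ) ≤ (t - 1) ^ γ := Real.rpow_nonneg (by linarith) _
        nlinarith [mul_nonneg (by linarith : (0:ℝ) ≤ 1/2 - c0) h0, hmono, hhalf]

/-- Integral estimate (3.2): for `γ > 1` there is a constant `c > 0`, depending only on `γ`,
such that for any `d ≥ 1` and any measurable a.e. nonnegative `ρ : ℝ^d → ℝ`,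
`c·(∫_{|ρ−1|≤1/2} (ρ−1)² + ∫_{|ρ−1|≥1/2} |ρ−1|^γ) ≤ ∫ (ρ^γ − 1 − γ(ρ−1))`,
all integrals taken in `[0,∞]` with respect to Lebesgue measure. -/
theorem entropy_integral_lower (γ : ℝ) (hγ : 1 < γ) :
    ∃ c : ℝ, 0 < c ∧ ∀ (d : ℕ), 1 ≤ d → ∀ ρ : (Fin d → ℝ) → ℝ,
      Measurable ρ → (∀ᵐ x : Fin d → ℝ, 0 ≤ ρ x) →
      ENNReal.ofReal c *
          ((∫⁻ x in {x : Fin d → ℝ | |ρ x - 1| ≤ 1 / 2},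
              ENNReal.ofReal ((ρ x - 1) ^ 2)) +
            ∫⁻ x in {x : Fin d → ℝ | 1 / 2 ≤ |ρ x - 1|},
              ENNReal.ofReal (|ρ x - 1| ^ γ)) ≤
        ∫⁻ x : Fin d → ℝ, ENNReal.ofReal (ρ x ^ γ - 1 - γ * (ρ x - 1)) := by
  obtain ⟨c0, hc0, hpt⟩ := pointwise_bound γ hγ
  refine ⟨c0 / 2, by positivity, fun d _ ρ hρ hae => ?_⟩
  set A : Set (Fin d → ℝ) := {x | |ρ x - 1| ≤ 1 / 2} with hA_def
  set B : Set (Fin d → ℝ) := {x | 1 / 2 ≤ |ρ x - 1|} with hB_def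
  have hmeas : Measurable fun x => |ρ x - 1| := (hρ.sub measurable_const).abs
  have hA : MeasurableSet A := measurableSet_le hmeas measurable_const
  have hB : MeasurableSet B := measurableSet_le measurable_const hmeas
  set g1 : (Fin d → ℝ) → ℝ≥0∞ := fun x => ENNReal.ofReal ((ρ x - 1) ^ 2) with hg1_def
  set g2 : (Fin d → ℝ) → ℝ≥0∞ := fun x => ENNReal.ofReal (|ρ x - 1| ^ γ) with hg2_def
  have hg1m : Measurable g1 := ((hρ.sub measurable_const).pow_const 2).ennreal_ofReal
  have hg2m : Measurable g2 :=
    ((Real.continuous_rpow_const (by linarith : (0:ℝ) ≤ γ)).measurable.comp hmeas).ennreal_ofReal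
  rw [← lintegral_indicator hA g1, ← lintegral_indicator hB g2,
    ← lintegral_add_left (hg1m.indicator hA) (B.indicator g2),
    ← lintegral_const_mul' _ _ ENNReal.ofReal_ne_top]
  apply lintegral_mono_ae
  filter_upwards [hae] with x hx
  obtain ⟨h1, h2⟩ := hpt (ρ x) hx
  have hf0 : 0 ≤ ρ x ^ γ - 1 - γ * (ρ x - 1) := entropy_nonneg γ hγ hx
  have hsq : (0:ℝ) ≤ (ρ x - 1) ^ 2 := sq_nonneg _
  have hrp : (0:ℝ) ≤ |ρ x - 1| ^ γ := Real.rpow_nonneg (abs_nonneg _) _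
  by_cases hxA : x ∈ A
  · by_cases hxB : x ∈ B
    · rw [Set.indicator_of_mem hxA, Set.indicator_of_mem hxB]
      simp only [hg1_def, hg2_def]
      rw [← ENNReal.ofReal_add hsq hrp, ← ENNReal.ofReal_mul (by positivity : (0:ℝ) ≤ c0 / 2)]
      exact ENNReal.ofReal_le_ofReal (by linarith [h1 hxA, h2 hxB])
    · rw [Set.indicator_of_mem hxA, Set.indicator_of_notMem hxB, add_zero]
      simp only [hg1_def]
      rw [← ENNReal.ofReal_mul (by positivity : (0:ℝ) ≤ c0 / 2)]
      exact ENNReal.ofReal_le_ofReal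
        (by nlinarith [h1 hxA, mul_nonneg hc0.le hsq])
  · by_cases hxB : x ∈ B
    · rw [Set.indicator_of_notMem hxA, Set.indicator_of_mem hxB, zero_add]
      simp only [hg2_def]
      rw [← ENNReal.ofReal_mul (by positivity : (0:ℝ) ≤ c0 / 2)]
      exact ENNReal.ofReal_le_ofReal
        (by nlinarith [h2 hxB, mul_nonneg hc0.le hrp])
    · rw [Set.indicator_of_notMem hxA, Set.indicator_of_notMem hxB, add_zero, mul_zero]
      exact zero_le
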